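/- arXiv:1812.03888 — 3 statements merged into one kernel-verified Lean document; each statement's English description precedes it below -/
import Mathlib

section
/- Let $r$ be an odd prime and $A$ a primitive $4r$-th root of unity. For $n, m \in \{0, 1, \ldots, r-2\}$, the equality $(-1)^n A^{n(n+2)} = (-1)^m A^{m(m+2)}$ holds if and only if $n = m$. -/
/-!
Since `A ^ (2 * r) = -1`, the two sides are `A ^ (2 * r * n + n * (n + 2))` and
`A ^ (2 * r * m + m * (m + 2))`, which agree iff `4 * r` divides the difference of the exponents,
`(n - m) * (2 * r + n + m + 2)`. Modulo the prime `r` this forces `r ∣ n - m`, hence `n = m`, or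
`n + m + 2 = r`; in the latter case the difference is `3 * r * (n - m)`, so `4 ∣ n - m`, which is
impossible because `n + m = r - 2` is odd.
-/

theorem IsPrimitiveRoot.pow_eq_neg_one {R : Type*} [CommRing R] [NoZeroDivisors R] {ζ : R}
    {k : ℕ} (hζ : IsPrimitiveRoot ζ (2 * k)) (hk : k ≠ 0) : ζ ^ k = -1 := by
  apply IsPrimitiveRoot.eq_neg_one_of_two_right
  simpa [hk] using hζ.pow_of_dvd hk (dvd_mul_left k 2)

theorem eq_of_four_mul_dvd_sub_mul_add {r n m : ℕ} (hp : r.Prime) (hodd : Odd r)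
    (hn : n + 2 ≤ r) (hm : m + 2 ≤ r)
    (h : 4 * (r : ℤ) ∣ ((n : ℤ) - m) * (2 * r + n + m + 2)) : n = m := by
  have hr : (r : ℤ) ∣ ((n : ℤ) - m) * (n + m + 2) := by
    rw [show ((n : ℤ) - m) * (n + m + 2) = (n - m) * (2 * r + n + m + 2) - r * (2 * (n - m)) by ring]
    exact dvd_sub ((dvd_mul_left _ 4).trans h) (dvd_mul_right _ _)
  rcases (Nat.prime_iff_prime_int.mp hp).dvd_mul.mp hr with hdiff | hsum
  · have := Int.eq_zero_of_dvd_of_natAbs_lt_natAbs hdiff (by omega)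
    omega
  · exfalso
    obtain ⟨k, hk⟩ := hsum
    have hk1 : k = 1 := by
      have : 0 < k := by nlinarith
      have : k < 2 := by nlinarith
      omega
    subst hk1
    have h3 : 4 ∣ 3 * ((n : ℤ) - m) := by
      rw [show ((n : ℤ) - m) * (2 * r + n + m + 2) = 3 * (n - m) * r by
        linear_combination ((n : ℤ) - m) * hk] at h
      exact (mul_dvd_mul_iff_right (by exact_mod_cast hp.ne_zero)).mp h
    obtain ⟨t, rfl⟩ := hodd
    push_cast at hk
    omega

theorem stmt_4_general {K : Type*} [Field K] (r : ℕ) (hp : r.Prime) (hodd : Odd r)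
    (A : K) (hA : IsPrimitiveRoot A (4 * r)) (n m : ℕ) (hn : n ≤ r - 2) (hm : m ≤ r - 2) :
    (-1 : K) ^ n * A ^ (n * (n + 2)) = (-1 : K) ^ m * A ^ (m * (m + 2)) ↔ n = m := by
  have h4r : 4 * r ≠ 0 := by have := hp.pos; omega
  have hneg : A ^ (2 * r) = -1 :=
    IsPrimitiveRoot.pow_eq_neg_one (by rwa [show 2 * (2 * r) = 4 * r by ring]) (by omega)
  have hexp (k : ℕ) : (-1 : K) ^ k * A ^ (k * (k + 2)) = A ^ (2 * r * k + k * (k + 2)) := by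
    rw [pow_add, pow_mul A (2 * r), hneg]
  rw [hexp, hexp, (hA.isOfFinOrder h4r).pow_eq_pow_iff_modEq, ← hA.eq_orderOf, Nat.modEq_iff_dvd]
  refine ⟨fun h ↦ ?_, by rintro rfl; simp⟩
  have := hp.two_le
  refine (eq_of_four_mul_dvd_sub_mul_add hp hodd (by omega) (by omega) ?_).symm
  convert h using 2 <;> push_cast <;> ring

theorem stmt_4 {K : Type*} [Field K] [CharZero K] (r : ℕ) (hp : r.Prime) (hodd : Odd r)
    (A : K) (hA : IsPrimitiveRoot A (4 * r)) (n m : ℕ) (hn : n ≤ r - 2) (hm : m ≤ r - 2) :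
    (-1 : K) ^ n * A ^ (n * (n + 2)) = (-1 : K) ^ m * A ^ (m * (m + 2)) ↔ n = m :=
  stmt_4_general r hp hodd A hA n m hn hm
end

section
/- Let $r \ge 2$ and $A$ a primitive $4r$-th root of unity. Define the $(r-1) \times (r-1)$ matrix $\Pi$ with entries $\Pi_{ij} = (-1)^{i+j}[(i+1)(j+1)]$ for $i, j \in \{0, \ldots, r-2\}$, where $[n]$ is the quantum integer. Then $\Pi^2 = \frac{-2r}{(A^2 - A^{-2})^2} \mathrm{Id}$; in particular $\Pi$ is invertible. -/
noncomputable def qint {K : Type*} [Field K] (A : K) (n : ℤ) : K :=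
  (A ^ (2 * n) - A ^ (-(2 * n))) / (A ^ (2 : ℤ) - A ^ (-2 : ℤ))

/-!
With q = A², a primitive 2r-th root of unity, [n] = (qⁿ - q⁻ⁿ)/(A² - A⁻²). In (Π²)ᵢₖ the signs
combine to (-1)^(i+k), leaving Σ_{m=1}^{r-1} (q^{am} - q^{-am})(q^{cm} - q^{-cm}) with a = i+1,
c = k+1. The summand is even and 2r-periodic in m and vanishes at m = 0 and m = r, so this is half
the sum over a full period, which orthogonality of the characters of ℤ/2r evaluates to -4r·δ_{ac}.
-/

open Finset

theorem IsPrimitiveRoot.sum_range_zpow_mul {K : Type*} [Field K] {q : K} {N : ℕ}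
    (hq : IsPrimitiveRoot q N) (n : ℤ) :
    ∑ m ∈ range N, q ^ (n * m) = if (N : ℤ) ∣ n then (N : K) else 0 := by
  simp only [zpow_mul, zpow_natCast]
  split_ifs with hn
  · simp [(hq.zpow_eq_one_iff_dvd n).mpr hn]
  · have hpow : (q ^ n) ^ N = 1 := by
      rw [← zpow_natCast, ← zpow_mul, mul_comm, zpow_mul, zpow_natCast, hq.pow_eq_one, one_zpow]
    rw [geom_sum_eq (mt (hq.zpow_eq_one_iff_dvd n).mp hn), hpow, sub_self, zero_div]

theorem Function.Even.sum_range_two_mul_of_periodic {M : Type*} [AddCommMonoid M] {f : ℤ → M}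
    {r : ℕ} (heven : Function.Even f) (hper : Function.Periodic f (2 * r)) (hr : 1 ≤ r) :
    ∑ m ∈ range (2 * r), f m = f 0 + f r + 2 • ∑ m ∈ range (r - 1), f (m + 1) := by
  obtain ⟨s, rfl⟩ : ∃ s, r = s + 1 := ⟨r - 1, by omega⟩
  have hupper : ∑ m ∈ range s, f ((s + 1 + (m + 1) : ℕ)) = ∑ m ∈ range s, f (m + 1) := by
    rw [← sum_range_reflect]
    refine sum_congr rfl fun m hm => ?_
    have hm : m < s := mem_range.mp hm
    rw [← heven, ← hper]
    congr 1
    push_cast [Nat.cast_sub (by omega : m ≤ s - 1), Nat.cast_sub (by omega : 1 ≤ s)]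
    ring
  rw [two_mul, sum_range_add, sum_range_succ', sum_range_succ' (fun m => f (s + 1 + m : ℕ)), hupper]
  simp only [Nat.cast_add, Nat.cast_one, Nat.cast_zero, add_zero, Nat.add_sub_cancel, two_nsmul]
  abel

section Orthogonality

variable {K : Type*} [Field K] {q : K} {r : ℕ} {a c : ℤ}

theorem IsPrimitiveRoot.sum_range_two_mul_sub_zpow_mul_sub_zpow (hq : IsPrimitiveRoot q (2 * r))
    (ha : 0 < a) (har : a < r) (hc : 0 < c) (hcr : c < r) :
    ∑ m ∈ range (2 * r), (q ^ (a * m) - q ^ (-a * m)) * (q ^ (c * m) - q ^ (-c * m)) =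
      if a = c then (-4 * r : K) else 0 := by
  have hq0 : q ≠ 0 := hq.ne_zero (by omega)
  have hexpand : ∀ m : ℤ, (q ^ (a * m) - q ^ (-a * m)) * (q ^ (c * m) - q ^ (-c * m)) =
      q ^ ((a + c) * m) + q ^ (-(a + c) * m) - (q ^ ((a - c) * m) + q ^ (-(a - c) * m)) := by
    intro m
    simp only [sub_mul, mul_sub, ← zpow_add₀ hq0]
    ring_nf
  have hsum : ¬ 2 * (r : ℤ) ∣ a + c := fun h => by
    have := Int.eq_zero_of_abs_lt_dvd h (abs_lt.mpr ⟨by omega, by omega⟩)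
    omega
  have hdiff : 2 * (r : ℤ) ∣ a - c ↔ a = c := ⟨fun h => by
    have := Int.eq_zero_of_abs_lt_dvd h (abs_lt.mpr ⟨by omega, by omega⟩)
    omega, fun h => by simp [h]⟩
  simp only [hexpand, sum_sub_distrib, sum_add_distrib, hq.sum_range_zpow_mul, Nat.cast_mul,
    Nat.cast_ofNat, dvd_neg, hsum, hdiff, if_false]
  split_ifs <;> ring

theorem IsPrimitiveRoot.sum_range_sub_zpow_mul_sub_zpow [CharZero K]
    (hq : IsPrimitiveRoot q (2 * r))
    (ha : 0 < a) (har : a < r) (hc : 0 < c) (hcr : c < r) :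
    ∑ m ∈ range (r - 1), (q ^ (a * (m + 1)) - q ^ (-a * (m + 1))) *
      (q ^ (c * (m + 1)) - q ^ (-c * (m + 1))) = if a = c then (-2 * r : K) else 0 := by
  have hq0 : q ≠ 0 := hq.ne_zero (by omega)
  have h2r : ((2 * r : ℕ) : ℤ) = 2 * r := by push_cast; ring
  obtain ⟨f, hf⟩ : ∃ f : ℤ → K,
      f = fun m => (q ^ (a * m) - q ^ (-a * m)) * (q ^ (c * m) - q ^ (-c * m)) := ⟨_, rfl⟩
  have heven : Function.Even f := fun m => by
    simp only [hf, mul_neg, neg_mul, neg_neg]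
    ring
  have hper : Function.Periodic f (2 * r) := fun m => by
    have hshift : ∀ n : ℤ, q ^ (n * (m + 2 * r)) = q ^ (n * m) := fun n => by
      rw [mul_add, zpow_add₀ hq0,
        (hq.zpow_eq_one_iff_dvd (n * (2 * r))).mpr (h2r ▸ dvd_mul_left _ n), mul_one]
    simp only [hf, hshift]
  have hf0 : f 0 = 0 := by simp [hf]
  have hfr : f r = 0 := by
    have hsym : q ^ (a * r) = q ^ (-a * r) := by
      rw [← div_eq_one_iff_eq (zpow_ne_zero _ hq0), ← zpow_sub₀ hq0, hq.zpow_eq_one_iff_dvd, h2r]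
      exact ⟨a, by ring⟩
    simp only [hf, hsym, sub_self, zero_mul]
  have hfold := heven.sum_range_two_mul_of_periodic hper (by omega)
  rw [hf0, hfr, zero_add, zero_add, two_nsmul] at hfold
  simp only [hf] at hfold
  rw [hq.sum_range_two_mul_sub_zpow_mul_sub_zpow ha har hc hcr] at hfold
  split_ifs at hfold ⊢ <;> linear_combination -hfold / 2

end Orthogonality

theorem IsPrimitiveRoot.sub_inv_ne_zero {K : Type*} [Field K] {ζ : K} {k : ℕ}
    (hζ : IsPrimitiveRoot ζ k) (hk : 2 < k) : ζ - ζ⁻¹ ≠ 0 := by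
  have hζ0 : ζ ≠ 0 := hζ.ne_zero (by omega)
  intro h
  have hsq : ζ ^ 2 = 1 := by
    rw [sub_eq_zero] at h
    calc ζ ^ 2 = ζ * ζ⁻¹ := by rw [sq, ← h]
      _ = 1 := mul_inv_cancel₀ hζ0
  exact hζ.pow_ne_one_of_pos_of_lt two_ne_zero hk hsq

theorem qint_eq {K : Type*} [Field K] (A : K) (n : ℤ) :
    qint A n = ((A ^ 2) ^ n - (A ^ 2) ^ (-n)) / (A ^ (2 : ℤ) - A ^ (-2 : ℤ)) := by
  rw [qint, zpow_mul, neg_mul_eq_mul_neg, zpow_mul]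
  simp only [zpow_ofNat]

theorem Matrix.isUnit_of_mul_self_eq_smul_one {n K : Type*} [Fintype n] [DecidableEq n] [Field K]
    {M : Matrix n n K} {c : K} (hc : c ≠ 0) (h : M * M = c • 1) : IsUnit M :=
  (M.isUnit_iff_isUnit_det).mpr <| M.isUnit_det_of_right_inverse (B := c⁻¹ • M) <| by
    rw [Matrix.mul_smul, h, smul_smul, inv_mul_cancel₀ hc, one_smul]

noncomputable def sMatrix {K : Type*} [Field K] (A : K) (n : ℕ) : Matrix (Fin n) (Fin n) K :=
  Matrix.of fun i j => (-1) ^ ((i : ℕ) + (j : ℕ)) * qint A (((i : ℕ) + 1) * ((j : ℕ) + 1))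

theorem sMatrix_mul_self {K : Type*} [Field K] [CharZero K] {A : K} {r : ℕ}
    (hA : IsPrimitiveRoot A (4 * r)) :
    sMatrix A (r - 1) * sMatrix A (r - 1) =
      ((-2 * r) / (A ^ (2 : ℤ) - A ^ (-2 : ℤ)) ^ 2) •
        (1 : Matrix (Fin (r - 1)) (Fin (r - 1)) K) := by
  ext i k
  have hr : 2 ≤ r := by have := i.pos; omega
  have hq : IsPrimitiveRoot (A ^ 2) (2 * r) := hA.pow (by omega) (by ring)
  have hsign : ∀ j : Fin (r - 1),
      (-1 : K) ^ ((i : ℕ) + (j : ℕ)) * (-1) ^ ((j : ℕ) + (k : ℕ)) = (-1) ^ ((i : ℕ) + (k : ℕ)) := by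
    intro j
    rw [← pow_add, show (i : ℕ) + j + (j + k) = i + k + 2 * j by ring, pow_add, pow_mul, neg_one_sq,
      one_pow, mul_one]
  calc (sMatrix A (r - 1) * sMatrix A (r - 1)) i k
      = (-1) ^ ((i : ℕ) + (k : ℕ)) / (A ^ (2 : ℤ) - A ^ (-2 : ℤ)) ^ 2 * ∑ m ∈ range (r - 1),
          ((A ^ 2) ^ (((i : ℕ) + 1 : ℤ) * (m + 1)) - (A ^ 2) ^ (-((i : ℕ) + 1 : ℤ) * (m + 1))) *
          ((A ^ 2) ^ (((k : ℕ) + 1 : ℤ) * (m + 1)) - (A ^ 2) ^ (-((k : ℕ) + 1 : ℤ) * (m + 1))) := by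
        rw [mul_sum, ← Fin.sum_univ_eq_sum_range, Matrix.mul_apply]
        refine sum_congr rfl fun j _ => ?_
        simp only [sMatrix, Matrix.of_apply, qint_eq, ← hsign j]
        generalize A ^ (2 : ℤ) - A ^ (-2 : ℤ) = d
        ring_nf
    _ = (-1) ^ ((i : ℕ) + (k : ℕ)) / (A ^ (2 : ℤ) - A ^ (-2 : ℤ)) ^ 2 *
          if ((i : ℕ) + 1 : ℤ) = (k : ℕ) + 1 then (-2 * r : K) else 0 := by
        rw [hq.sum_range_sub_zpow_mul_sub_zpow] <;> omega
    _ = _ := by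
      have hidx : ((i : ℕ) + 1 : ℤ) = (k : ℕ) + 1 ↔ i = k := by rw [Fin.ext_iff]; omega
      rw [Matrix.smul_apply, Matrix.one_apply, smul_eq_mul, if_congr hidx rfl rfl]
      split_ifs with hik
      · rw [hik, ← two_mul, pow_mul, neg_one_sq, one_pow]
        ring
      · simp

theorem stmt_7 (r : ℕ) (hr : 2 ≤ r) (A : ℂ) (hA : IsPrimitiveRoot A (4 * r))
    (Pi : Matrix (Fin (r - 1)) (Fin (r - 1)) ℂ)
    (hPi : ∀ i j : Fin (r - 1), Pi i j = (-1 : ℂ) ^ ((i : ℕ) + (j : ℕ)) *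
      qint A (((i : ℕ) + 1) * ((j : ℕ) + 1))) :
    Pi * Pi = ((-2 * (r : ℂ)) / (A ^ (2 : ℤ) - A ^ (-2 : ℤ)) ^ 2) • (1 : Matrix (Fin (r - 1)) (Fin (r - 1)) ℂ)
      ∧ IsUnit Pi := by
  obtain rfl : Pi = sMatrix A (r - 1) := Matrix.ext hPi
  have hd : A ^ (2 : ℤ) - A ^ (-2 : ℤ) ≠ 0 := by
    rw [zpow_neg, zpow_ofNat]
    exact (hA.pow (by omega) (by ring) : IsPrimitiveRoot (A ^ 2) (2 * r)).sub_inv_ne_zero (by omega)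
  have hc : (-2 * (r : ℂ)) / (A ^ (2 : ℤ) - A ^ (-2 : ℤ)) ^ 2 ≠ 0 :=
    div_ne_zero (mul_ne_zero (by norm_num) (Nat.cast_ne_zero.mpr (by omega))) (pow_ne_zero 2 hd)
  have hsq := sMatrix_mul_self hA
  exact ⟨hsq, Matrix.isUnit_of_mul_self_eq_smul_one hc hsq⟩
end

section
/- Let $r \ge 2$ and $A$ a primitive $4r$-th root of unity. The equation $-A^{2n+2} - A^{-2n-2} = -A^2 - A^{-2}$ has no solution with $n \in \{1, \ldots, r-2\}$; consequently, if an element $f$ of a $K$-vector space satisfies $(-A^{2n+2}-A^{-2n-2})f = (-A^2-A^{-2})f$ for such $n$, then $f = 0$. -/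
/-!
Writing `x = A ^ (2n+2)` and `y = A ^ 2`, the identity `x + x⁻¹ = y + y⁻¹` factors as
`(x - y) (x y - 1) = 0`, so it forces `A ^ (2n) = 1` or `A ^ (2n+4) = 1`. Both exponents lie
strictly between `0` and `4r`, which is impossible for a primitive `4r`-th root of unity.
A nonzero scalar then acts injectively on any vector space, which gives the second claim.
-/

theorem add_inv_eq_add_inv_iff {K : Type*} [Field K] {x y : K} (hx : x ≠ 0) (hy : y ≠ 0) :
    x + x⁻¹ = y + y⁻¹ ↔ x = y ∨ x * y = 1 := by
  have hfactor : x + x⁻¹ - (y + y⁻¹) = (x - y) * (x * y - 1) / (x * y) := by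
    field_simp
    ring
  rw [← sub_eq_zero, hfactor, div_eq_zero_iff, mul_eq_zero, sub_eq_zero, sub_eq_zero]
  simp [hx, hy]

theorem IsPrimitiveRoot.pow_add_inv_pow_ne {K : Type*} [Field K] {ζ : K} {k a b : ℕ}
    (hζ : IsPrimitiveRoot ζ k) (hba : b < a) (hab : a + b < k) :
    ζ ^ a + (ζ ^ a)⁻¹ ≠ ζ ^ b + (ζ ^ b)⁻¹ := by
  have hζ0 : ζ ≠ 0 := hζ.ne_zero (by omega)
  rw [Ne, add_inv_eq_add_inv_iff (pow_ne_zero _ hζ0) (pow_ne_zero _ hζ0), ← pow_add, not_or]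
  exact ⟨fun h ↦ hba.ne' (hζ.pow_inj (by omega) (by omega) h),
    hζ.pow_ne_one_of_pos_of_lt (by omega) hab⟩

theorem stmt_18_general {K : Type*} [Field K] (r : ℕ) (A : K)
    (hA : IsPrimitiveRoot A (4 * r)) (n : ℕ) (h1 : 1 ≤ n) (h2 : n ≤ r - 2) :
    (-A ^ (2 * n + 2) - A ^ (-(2 * (n : ℤ) + 2)) ≠ -A ^ (2 : ℤ) - A ^ (-2 : ℤ)) ∧
    (∀ (V : Type) [AddCommGroup V] [Module K V] (f : V),
      (-A ^ (2 * n + 2) - A ^ (-(2 * (n : ℤ) + 2))) • f =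
        (-A ^ (2 : ℤ) - A ^ (-2 : ℤ)) • f → f = 0) := by
  have hne : -A ^ (2 * n + 2) - A ^ (-(2 * (n : ℤ) + 2)) ≠ -A ^ (2 : ℤ) - A ^ (-2 : ℤ) := by
    have hexp : -(2 * (n : ℤ) + 2) = -((2 * n + 2 : ℕ) : ℤ) := by push_cast; ring
    rw [hexp, zpow_neg, zpow_natCast, zpow_neg, zpow_ofNat, ← neg_add', ← neg_add',
      Ne, neg_inj]
    exact hA.pow_add_inv_pow_ne (by omega) (by omega)
  refine ⟨hne, fun V _ _ f hf ↦ ?_⟩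
  by_contra hf0
  exact hne (smul_left_injective K hf0 hf)

theorem stmt_18 {K : Type*} [Field K] [CharZero K] (r : ℕ) (hr : 2 ≤ r) (A : K)
    (hA : IsPrimitiveRoot A (4 * r)) (n : ℕ) (h1 : 1 ≤ n) (h2 : n ≤ r - 2) :
    (-A ^ (2 * n + 2) - A ^ (-(2 * (n : ℤ) + 2)) ≠ -A ^ (2 : ℤ) - A ^ (-2 : ℤ)) ∧
    (∀ (V : Type) [AddCommGroup V] [Module K V] (f : V),
      (-A ^ (2 * n + 2) - A ^ (-(2 * (n : ℤ) + 2))) • f =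
        (-A ^ (2 : ℤ) - A ^ (-2 : ℤ)) • f → f = 0) :=
  stmt_18_general r A hA n h1 h2
end
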